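/- Pointwise coercivity under the eigenvalue assumption (core of Lemma 5.1, curl case): Let β : ℝ³ → ℝ³ be differentiable at x ∈ ℝ³, let γ ∈ ℝ and ρ₀ > 0, and assume that the smallest eigenvalue of the real symmetric matrix γ I + ½(Dβ(x) + Dβ(x)ᵀ) − ½ (div β)(x) I is at least ρ₀. Then for every u : ℝ³ → ℝ³ differentiable at x, γ |u(x)|² + ½ u(x) · [(L^{curl}_β u)(x) + ((L^{curl}_β)^* u)(x)] ≥ ρ₀ |u(x)|². -/

import Mathlib

open Finset

noncomputable section

/-- Points of `ℝ³`. -/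
abbrev V3 := Fin 3 → ℝ

/-- Euclidean dot product on `ℝ³`. -/
def dot3 (a b : V3) : ℝ := ∑ i, a i * b i

/-- Cross product on `ℝ³`. -/
def cross3 (a b : V3) : V3 :=
  ![a 1 * b 2 - a 2 * b 1, a 2 * b 0 - a 0 * b 2, a 0 * b 1 - a 1 * b 0]

/-- The `j`-th standard basis vector of `ℝ³`. -/
def e3 (j : Fin 3) : V3 := Pi.single j 1

/-- Partial derivative `∂ⱼ wᵢ (x)` of a vector field `w : ℝ³ → ℝ³`. -/
def pd (w : V3 → V3) (x : V3) (i j : Fin 3) : ℝ := fderiv ℝ w x (e3 j) i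

/-- Divergence `div w = ∂₁w₁ + ∂₂w₂ + ∂₃w₃` of a vector field at a point. -/
def divg (w : V3 → V3) (x : V3) : ℝ := ∑ i, pd w x i i

/-- Curl `(∂₂w₃ − ∂₃w₂, ∂₃w₁ − ∂₁w₃, ∂₁w₂ − ∂₂w₁)` of a vector field at a point
(0-based indices). -/
def curl3 (w : V3 → V3) (x : V3) : V3 :=
  ![pd w x 2 1 - pd w x 1 2, pd w x 0 2 - pd w x 2 0, pd w x 1 0 - pd w x 0 1]

/-- Gradient `∇f = (∂₁f, ∂₂f, ∂₃f)` of a scalar function at a point. -/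
def grad3 (f : V3 → ℝ) (x : V3) : V3 := fun j => fderiv ℝ f x (e3 j)

/-- Jacobian matrix `Dw(x)` with entries `(Dw)ᵢⱼ = ∂ⱼwᵢ`. -/
def jac (w : V3 → V3) (x : V3) : Matrix (Fin 3) (Fin 3) ℝ :=
  Matrix.of fun i j => pd w x i j

/-- The `H(curl)` advection operator `L^curl_β u = ∇(β·u) + (curl u) × β`. -/
def Lcurl (β u : V3 → V3) (x : V3) : V3 :=
  grad3 (fun y => dot3 (β y) (u y)) x + cross3 (curl3 u x) (β x)

/-- Formal adjoint `(L^curl_β)^* u = −β (div u) + curl(β × u)`. -/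
def LcurlAdj (β u : V3 → V3) (x : V3) : V3 :=
  -(divg u x • β x) + curl3 (fun y => cross3 (β y) (u y)) x

/-- The `H(div)` advection operator `L^div_β u = β (div u) − curl(β × u)`. -/
def Ldiv (β u : V3 → V3) (x : V3) : V3 :=
  divg u x • β x - curl3 (fun y => cross3 (β y) (u y)) x

/-- Formal adjoint `(L^div_β)^* u = −∇(β·u) − (curl u) × β`. -/
def LdivAdj (β u : V3 → V3) (x : V3) : V3 :=
  -grad3 (fun y => dot3 (β y) (u y)) x - cross3 (curl3 u x) (β x)

end

noncomputable section

/-- The symmetric matrix `γ I + ½(Dβ(x) + Dβ(x)ᵀ) − ½ (div β)(x) I`. -/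
def coercivityMatrix (β : V3 → V3) (x : V3) (γ : ℝ) : Matrix (Fin 3) (Fin 3) ℝ :=
  γ • (1 : Matrix (Fin 3) (Fin 3) ℝ) +
    (1 / 2 : ℝ) • (jac β x + (jac β x).transpose) -
    ((divg β x) / 2) • (1 : Matrix (Fin 3) (Fin 3) ℝ)

end

/-!
The operator `L^curl_β + (L^curl_β)^*` has order zero: by the product rule, every term of
`u · (L^curl_β u + (L^curl_β)^* u)` containing a derivative of `u` cancels, leaving
`u · (Dβ + Dβᵀ) u − (div β) |u|²`. The left-hand side of the inequality is therefore the quadratic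
form of the coercivity matrix at `u(x)`, which the spectral theorem bounds below by its smallest
eigenvalue times `|u(x)|²`.
-/

open Matrix

open scoped MatrixOrder in
theorem Matrix.IsHermitian.mul_dotProduct_self_le_dotProduct_mulVec {n : Type*} [Fintype n]
    [DecidableEq n] {M : Matrix n n ℝ} (hM : M.IsHermitian) {ρ : ℝ}
    (h : ∀ i, ρ ≤ hM.eigenvalues i) (v : n → ℝ) :
    ρ * (v ⬝ᵥ v) ≤ v ⬝ᵥ (M *ᵥ v) := by
  have hle : algebraMap ℝ _ ρ ≤ M := by
    rw [algebraMap_le_iff_le_spectrum hM.isSelfAdjoint, hM.spectrum_real_eq_range_eigenvalues]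
    rintro _ ⟨i, rfl⟩
    exact h i
  simpa [Algebra.algebraMap_eq_smul_one, sub_mulVec, smul_mulVec, dotProduct_sub,
    sub_nonneg] using (le_iff.mp hle).dotProduct_mulVec_nonneg v

theorem LinearMap.fderiv_apply_of_bilinear {𝕜 E F G H : Type*} [NontriviallyNormedField 𝕜]
    [CompleteSpace 𝕜] [NormedAddCommGroup E] [NormedSpace 𝕜 E] [FiniteDimensional 𝕜 E]
    [NormedAddCommGroup F] [NormedSpace 𝕜 F] [FiniteDimensional 𝕜 F]
    [NormedAddCommGroup G] [NormedSpace 𝕜 G] [NormedAddCommGroup H] [NormedSpace 𝕜 H]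
    (B : E →ₗ[𝕜] F →ₗ[𝕜] G) {f : H → E} {g : H → F} {x : H}
    (hf : DifferentiableAt 𝕜 f x) (hg : DifferentiableAt 𝕜 g x) (h : H) :
    fderiv 𝕜 (fun y => B (f y) (g y)) x h =
      B (fderiv 𝕜 f x h) (g x) + B (f x) (fderiv 𝕜 g x h) := by
  let Bc : E →L[𝕜] F →L[𝕜] G :=
    LinearMap.toContinuousLinearMap (LinearMap.toContinuousLinearMap.toLinearMap ∘ₗ B)
  have hBc : (fun y => B (f y) (g y)) = fun y => Bc (f y) (g y) := rfl
  rw [hBc, Bc.fderiv_of_bilinear hf hg]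
  simp [Bc, add_comm]

section
variable {β u : V3 → V3} {x : V3}

theorem fderiv_e3_apply (w : V3 → V3) (x : V3) (i j : Fin 3) :
    fderiv ℝ w x (e3 j) i = pd w x i j := rfl

-- `dot3` and `cross3` are definitionally Mathlib's `dotProduct` and `crossProduct`.
theorem grad3_dot3 (hβ : DifferentiableAt ℝ β x) (hu : DifferentiableAt ℝ u x) :
    grad3 (fun y => dot3 (β y) (u y)) x =
      fun j => dot3 (fderiv ℝ β x (e3 j)) (u x) + dot3 (β x) (fderiv ℝ u x (e3 j)) :=
  funext fun j => (dotProductBilin ℝ ℝ).fderiv_apply_of_bilinear hβ hu (e3 j)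

theorem pd_cross3 (hβ : DifferentiableAt ℝ β x) (hu : DifferentiableAt ℝ u x) (i j : Fin 3) :
    pd (fun y => cross3 (β y) (u y)) x i j =
      cross3 (fderiv ℝ β x (e3 j)) (u x) i + cross3 (β x) (fderiv ℝ u x (e3 j)) i :=
  congr_fun ((crossProduct (R := ℝ)).fderiv_apply_of_bilinear hβ hu (e3 j)) i

theorem dot3_Lcurl_add_LcurlAdj (hβ : DifferentiableAt ℝ β x) (hu : DifferentiableAt ℝ u x) :
    dot3 (u x) (Lcurl β u x + LcurlAdj β u x) =
      u x ⬝ᵥ ((jac β x + (jac β x)ᵀ) *ᵥ u x) - divg β x * (u x ⬝ᵥ u x) := by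
  simp only [Lcurl, LcurlAdj, curl3, grad3_dot3 hβ hu, pd_cross3 hβ hu]
  simp only [dot3, cross3, divg, jac, dotProduct, mulVec, fderiv_e3_apply, Fin.sum_univ_three,
    Pi.add_apply, Pi.neg_apply, Pi.smul_apply, smul_eq_mul, Matrix.add_apply, transpose_apply,
    of_apply, cons_val_zero, cons_val_one, cons_val_two, head_cons, tail_cons, Fin.isValue]
  ring

theorem dotProduct_coercivityMatrix_mulVec (γ : ℝ) (v : V3) :
    v ⬝ᵥ (coercivityMatrix β x γ *ᵥ v) =
      γ * (v ⬝ᵥ v) + 1 / 2 * (v ⬝ᵥ ((jac β x + (jac β x)ᵀ) *ᵥ v)) -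
        divg β x / 2 * (v ⬝ᵥ v) := by
  simp only [coercivityMatrix, sub_mulVec, add_mulVec, smul_mulVec, one_mulVec, dotProduct_sub,
    dotProduct_add, dotProduct_smul, smul_eq_mul]

end

theorem pointwise_coercivity_curl_general
    (β : V3 → V3) (x : V3) (γ ρ₀ : ℝ)
    (hβ : DifferentiableAt ℝ β x)
    (hM : (coercivityMatrix β x γ).IsHermitian)
    (heig : ∀ i, ρ₀ ≤ hM.eigenvalues i)
    (u : V3 → V3) (hu : DifferentiableAt ℝ u x) :
    ρ₀ * ∑ i, (u x i) ^ 2 ≤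
      γ * ∑ i, (u x i) ^ 2 +
        (1 / 2) * dot3 (u x) (Lcurl β u x + LcurlAdj β u x) := by
  have hnorm : ∑ i, u x i ^ 2 = u x ⬝ᵥ u x := by simp only [dotProduct, sq]
  have hquad := hM.mul_dotProduct_self_le_dotProduct_mulVec heig (u x)
  rw [dotProduct_coercivityMatrix_mulVec] at hquad
  rw [hnorm, dot3_Lcurl_add_LcurlAdj hβ hu]
  linarith

/-- **Pointwise coercivity under the eigenvalue assumption** (core of Lemma
5.1, curl case): if the smallest eigenvalue of the real symmetric matrix
`γ I + ½(Dβ(x) + Dβ(x)ᵀ) − ½ (div β)(x) I` is at least `ρ₀ > 0`, then for every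
`u` differentiable at `x`,
`γ |u(x)|² + ½ u(x)·[(L^curl_β u)(x) + ((L^curl_β)^* u)(x)] ≥ ρ₀ |u(x)|²`. -/
theorem pointwise_coercivity_curl
    (β : V3 → V3) (x : V3) (γ ρ₀ : ℝ) (hρ : 0 < ρ₀)
    (hβ : DifferentiableAt ℝ β x)
    (hM : (coercivityMatrix β x γ).IsHermitian)
    (heig : ∀ i, ρ₀ ≤ hM.eigenvalues i)
    (u : V3 → V3) (hu : DifferentiableAt ℝ u x) :
    ρ₀ * ∑ i, (u x i) ^ 2 ≤
      γ * ∑ i, (u x i) ^ 2 +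
        (1 / 2) * dot3 (u x) (Lcurl β u x + LcurlAdj β u x) :=
  pointwise_coercivity_curl_general β x γ ρ₀ hβ hM heig u hu
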